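/- arXiv:1112.5129 — 3 statements merged into one kernel-verified Lean document; each statement's English description precedes it below -/
import Mathlib

section
/- Let K be a convex body in ℝⁿ containing the origin in its interior, with C² boundary and everywhere positive Gaussian curvature, and let φ : (0,∞) → (0,∞) be concave with φ(0) := 0. Then the L_φ-affine surface area as_φ(K) = ∫_{S^{n-1}} φ(1/(f_K(u) h_K(u)^{n+1})) h_K(u) f_K(u) dσ(u) satisfies as_φ(K) ≤ n·|K|·φ(|K°|/|K|), where |K| is the volume of K and K° = {y : ⟨x,y⟩ ≤ 1 for all x ∈ K} is the polar body. -/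
/-!
Weight the sphere by the cone-volume density `h_K f_K`, whose total mass is `n|K|`. Against
this weight, `1 / (f_K h_K^{n+1})` has integral `∫ h_K^{-n} = n|K°|`, i.e. mean `|K°|/|K|`, so
the bound is Jensen's inequality for the concave `φ`. Since `f_K` and `h_K` are continuous and
positive on the compact sphere, that function takes values in a compact interval of `(0, ∞)`,
where `φ` is continuous, as the closed-set form of Jensen's inequality requires.
-/

open MeasureTheory Set

variable {X : Type*} [TopologicalSpace X] [CompactSpace X] [MeasurableSpace X]
  [OpensMeasurableSpace X]

theorem Continuous.integrable_of_compactSpace {E : Type*} [NormedAddCommGroup E]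
    {μ : Measure X} [IsFiniteMeasure μ] {f : X → E} (hf : Continuous f) : Integrable f μ := by
  obtain ⟨C, hC⟩ := (isCompact_range hf).isBounded.exists_norm_le
  exact .of_bound hf.aestronglyMeasurable_of_compactSpace C
    (ae_of_all _ fun x => hC _ (mem_range_self x))

theorem ConcaveOn.average_comp_le_of_continuous {ν : Measure X} [IsFiniteMeasure ν] [NeZero ν]
    {s : Set ℝ} {φ : ℝ → ℝ} (hφ : ConcaveOn ℝ s φ) (hs : IsOpen s) {g : X → ℝ}
    (hg : Continuous g) (hgs : ∀ x, g x ∈ s) :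
    ⨍ x, φ (g x) ∂ν ≤ φ (⨍ x, g x ∂ν) := by
  have := ν.nonempty_of_neZero
  obtain ⟨a, -, ha⟩ := isCompact_univ.exists_isMinOn univ_nonempty hg.continuousOn
  obtain ⟨b, -, hb⟩ := isCompact_univ.exists_isMaxOn univ_nonempty hg.continuousOn
  have hIcc : Icc (g a) (g b) ⊆ s := hφ.1.ordConnected.out (hgs a) (hgs b)
  have hφc : ContinuousOn φ s := hφ.continuousOn hs
  exact (hφ.subset hIcc (convex_Icc _ _)).le_map_average (hφc.mono hIcc) isClosed_Icc
    (ae_of_all _ fun x => ⟨ha (mem_univ x), hb (mem_univ x)⟩) hg.integrable_of_compactSpace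
    (hφc.comp_continuous hg hgs).integrable_of_compactSpace

theorem ConcaveOn.integral_comp_mul_le {μ : Measure X} {s : Set ℝ} {φ : ℝ → ℝ}
    (hφ : ConcaveOn ℝ s φ) (hs : IsOpen s) {w g : X → ℝ} (hw : Measurable w)
    (hw0 : ∀ x, 0 ≤ w x) (hwpos : 0 < ∫ x, w x ∂μ)
    (hg : Continuous g) (hgs : ∀ x, g x ∈ s) :
    ∫ x, φ (g x) * w x ∂μ ≤ (∫ x, w x ∂μ) * φ ((∫ x, g x * w x ∂μ) / ∫ x, w x ∂μ) := by
  set ν := μ.withDensity fun x => ENNReal.ofReal (w x)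
  have hν_integral (F : X → ℝ) : ∫ x, F x ∂ν = ∫ x, F x * w x ∂μ := by
    rw [integral_withDensity_eq_integral_toReal_smul hw.ennreal_ofReal
      (ae_of_all _ fun _ => ENNReal.ofReal_lt_top)]
    congr 1 with x
    rw [ENNReal.toReal_ofReal (hw0 x), smul_eq_mul, mul_comm]
  have hν_univ : ν univ = ENNReal.ofReal (∫ x, w x ∂μ) := by
    rw [withDensity_apply _ MeasurableSet.univ, Measure.restrict_univ,
      ofReal_integral_eq_lintegral_ofReal (.of_integral_ne_zero hwpos.ne') (ae_of_all _ hw0)]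
  have : IsFiniteMeasure ν := ⟨by rw [hν_univ]; exact ENNReal.ofReal_lt_top⟩
  have : NeZero ν := ⟨fun h => by simp [h, hwpos.not_ge] at hν_univ⟩
  have hν_real : ν.real univ = ∫ x, w x ∂μ := by
    rw [measureReal_def, hν_univ, ENNReal.toReal_ofReal hwpos.le]
  have jensen := hφ.average_comp_le_of_continuous (ν := ν) hs hg hgs
  rwa [average_eq, average_eq, hν_real, smul_eq_mul, smul_eq_mul, hν_integral, hν_integral,
    inv_mul_eq_div, inv_mul_eq_div, div_le_iff₀' hwpos] at jensen

theorem stmt6_general {n : ℕ} (hn : 2 ≤ n)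
    (K : Set (EuclideanSpace ℝ (Fin n)))
    (hKcomp : IsCompact K)
    (hK0 : (0 : EuclideanSpace ℝ (Fin n)) ∈ interior K)
    (hK fK : Metric.sphere (0 : EuclideanSpace ℝ (Fin n)) 1 → ℝ)
    (hKpos : ∀ u, 0 < hK u) (fKpos : ∀ u, 0 < fK u)
    (hKcont : Continuous hK) (fKcont : Continuous fK)
    (vol pvol : ℝ)
    (hvol : vol = (volume K).toReal)
    (hcone : ∫ u, hK u * fK u ∂(μH[(n - 1 : ℝ)]) = n * vol)
    (hpolarvol : ∫ u, (hK u ^ (n : ℕ))⁻¹ ∂(μH[(n - 1 : ℝ)]) = n * pvol)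
    (φ : ℝ → ℝ)
    (hφconc : ConcaveOn ℝ (Set.Ioi 0) φ) :
    ∫ u, φ (1 / (fK u * hK u ^ (n + 1))) * hK u * fK u ∂(μH[(n - 1 : ℝ)])
      ≤ n * vol * φ (pvol / vol) := by
  have hn0 : (0 : ℝ) < n := by exact_mod_cast (by omega : 0 < n)
  have hvol_pos : 0 < vol := hvol ▸ ENNReal.toReal_pos
    (Measure.measure_pos_of_nonempty_interior _ ⟨0, hK0⟩).ne' hKcomp.measure_lt_top.ne
  have hw_pos : 0 < ∫ u, hK u * fK u ∂(μH[(n - 1 : ℝ)]) := by rw [hcone]; positivity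
  have hg_pos (u) : 0 < fK u * hK u ^ (n + 1) := mul_pos (fKpos u) (pow_pos (hKpos u) _)
  have key := hφconc.integral_comp_mul_le isOpen_Ioi (w := fun u => hK u * fK u)
    (g := fun u => 1 / (fK u * hK u ^ (n + 1)))
    (hKcont.mul fKcont).measurable (fun u => (mul_pos (hKpos u) (fKpos u)).le) hw_pos
    (continuous_const.div (fKcont.mul (hKcont.pow _)) fun u => (hg_pos u).ne')
    fun u => one_div_pos.mpr (hg_pos u)
  have hpolar : ∫ u, 1 / (fK u * hK u ^ (n + 1)) * (hK u * fK u) ∂(μH[(n - 1 : ℝ)])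
      = n * pvol := by
    rw [← hpolarvol]
    congr 1 with u
    have := (hKpos u).ne'
    have := (fKpos u).ne'
    field_simp
    ring
  rw [hpolar, hcone, mul_div_mul_left _ _ hn0.ne'] at key
  simpa only [mul_assoc] using key

/-- for a convex body `K` of class `C²₊` (encoded by its support function `hK`,
its curvature function `fK`, and the standard identities `∫ hK·fK dσ = n|K|` and
`∫ hK⁻ⁿ dσ = n|K°|` they satisfy), and a concave `φ : (0,∞) → (0,∞)` with `φ(0) = 0`,
the `L_φ`-affine surface area satisfies `as_φ(K) ≤ n·|K|·φ(|K°|/|K|)`. -/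
theorem stmt6 {n : ℕ} (hn : 2 ≤ n)
    (K : Set (EuclideanSpace ℝ (Fin n)))
    (hKconv : Convex ℝ K) (hKcomp : IsCompact K)
    (hK0 : (0 : EuclideanSpace ℝ (Fin n)) ∈ interior K)
    (hK fK : Metric.sphere (0 : EuclideanSpace ℝ (Fin n)) 1 → ℝ)
    (hsupp : ∀ u, hK u = sSup ((fun x => (inner ℝ x (u : EuclideanSpace ℝ (Fin n)) : ℝ)) '' K))
    (hKpos : ∀ u, 0 < hK u) (fKpos : ∀ u, 0 < fK u)
    (hKcont : Continuous hK) (fKcont : Continuous fK)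
    (vol pvol : ℝ)
    (hvol : vol = (volume K).toReal)
    (hpvol : pvol = (volume {y : EuclideanSpace ℝ (Fin n) |
      ∀ x ∈ K, (inner ℝ x y : ℝ) ≤ 1}).toReal)
    (hcone : ∫ u, hK u * fK u ∂(μH[(n - 1 : ℝ)]) = n * vol)
    (hpolarvol : ∫ u, (hK u ^ (n : ℕ))⁻¹ ∂(μH[(n - 1 : ℝ)]) = n * pvol)
    (φ : ℝ → ℝ) (hφpos : ∀ t : ℝ, 0 < t → 0 < φ t)
    (hφconc : ConcaveOn ℝ (Set.Ioi 0) φ) (hφ0 : φ 0 = 0) :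
    ∫ u, φ (1 / (fK u * hK u ^ (n + 1))) * hK u * fK u ∂(μH[(n - 1 : ℝ)])
      ≤ n * vol * φ (pvol / vol) :=
  stmt6_general hn K hKcomp hK0 hK fK hKpos fKpos hKcont fKcont vol pvol hvol hcone hpolarvol φ
    hφconc
end

section
/- Let K₁,…,K_n ∈ C²₊ be convex bodies and φ₁,…,φ_n ∈ Conc(0,∞). For 1 ≤ m ≤ n, as(φ₁,K₁;…;φ_n,K_n)^m ≤ ∏_{i=0}^{m-1} as(φ₁,K₁; …; φ_{n-m},K_{n-m}; φ_{n-i},K_{n-i}; …; φ_{n-i},K_{n-i}), where in the i-th factor the pair (φ_{n-i}, K_{n-i}) is repeated m times. -/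
/-
The pointwise identity `∏_{i ≤ n} gᵢ^{1/n} = ∏_{i < m} (G · g_{n-i}^{m/n})^{1/m}`, with
`G = ∏_{j ≤ n-m} g_j^{1/n}`, turns the left-hand side into the integral of a geometric mean of
the `m` integrands on the right; Hölder's inequality with the exponents `1/m, …, 1/m` bounds that
integral by the geometric mean of their integrals.
-/

open MeasureTheory Filter

/-- Membership in the class `Conc(0,∞)`. -/
def MemConc (φ : ℝ → ℝ) : Prop :=
  (∀ t : ℝ, 0 < t → 0 < φ t) ∧
    ((∃ c : ℝ, 0 < c ∧ ∀ t : ℝ, 0 < t → φ t = c) ∨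
      (ConcaveOn ℝ (Set.Ioi 0) φ ∧
        Tendsto φ (nhdsWithin 0 (Set.Ioi 0)) (nhds 0) ∧
        Tendsto (fun t => φ t / t) atTop (nhds 0)))


open Finset

section Holder

variable {α ι : Type*} [MeasurableSpace α] {μ : Measure α}

theorem integral_prod_rpow_le_prod_integral_rpow (s : Finset ι) {f : ι → α → ℝ}
    (hf : ∀ i ∈ s, Integrable (f i) μ) (hf₀ : ∀ i ∈ s, ∀ a, 0 ≤ f i a)
    {p : ι → ℝ} (hp : ∑ i ∈ s, p i = 1) (hp₀ : ∀ i ∈ s, 0 ≤ p i) :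
    ∫ a, ∏ i ∈ s, f i a ^ p i ∂μ ≤ ∏ i ∈ s, (∫ a, f i a ∂μ) ^ p i := by
  have holder := ENNReal.lintegral_prod_norm_pow_le s
    (fun i hi => (hf i hi).aemeasurable.ennreal_ofReal) hp hp₀
  have hfin : ∏ i ∈ s, (∫⁻ a, ENNReal.ofReal (f i a) ∂μ) ^ p i ≠ ⊤ :=
    ENNReal.prod_ne_top fun i hi =>
      ENNReal.rpow_ne_top_of_nonneg (hp₀ i hi) (hf i hi).lintegral_lt_top.ne
  have hL : ∫ a, ∏ i ∈ s, f i a ^ p i ∂μ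
      = (∫⁻ a, ∏ i ∈ s, ENNReal.ofReal (f i a) ^ p i ∂μ).toReal := by
    rw [integral_eq_lintegral_of_nonneg_ae
      (.of_forall fun a => prod_nonneg fun i hi => Real.rpow_nonneg (hf₀ i hi a) _)
      (aestronglyMeasurable_fun_prod _ fun i hi =>
        ((hf i hi).aemeasurable.pow_const (p i)).aestronglyMeasurable)]
    congr 1
    refine lintegral_congr fun a => ?_
    rw [ENNReal.ofReal_prod_of_nonneg fun i hi => Real.rpow_nonneg (hf₀ i hi a) _]
    exact prod_congr rfl fun i hi => (ENNReal.ofReal_rpow_of_nonneg (hf₀ i hi a) (hp₀ i hi)).symm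
  rw [hL]
  refine (ENNReal.toReal_mono hfin holder).trans_eq ?_
  rw [ENNReal.toReal_prod]
  refine prod_congr rfl fun i hi => ?_
  rw [← ENNReal.toReal_rpow, integral_eq_lintegral_of_nonneg_ae (.of_forall (hf₀ i hi))
    (hf i hi).aestronglyMeasurable]

end Holder

section CompactSpace

variable {X ι : Type*} [TopologicalSpace X] [CompactSpace X] [MeasurableSpace X]
  {μ : Measure X}

theorem Continuous.not_integrable_of_pos {F : X → ℝ} (hF : Continuous F) (hpos : ∀ x, 0 < F x)
    (hμ : ¬ IsFiniteMeasure μ) : ¬ Integrable F μ := by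
  intro hint
  have : Nonempty X := by
    by_contra hX
    rw [not_nonempty_iff] at hX
    exact hμ inferInstance
  obtain ⟨x₀, -, hx₀⟩ := isCompact_univ.exists_isMinOn Set.univ_nonempty hF.continuousOn
  have hconst : Integrable (fun _ => F x₀) μ :=
    hint.mono' aestronglyMeasurable_const <| .of_forall fun x => by
      rw [Real.norm_of_nonneg (hpos x₀).le]
      exact hx₀ (Set.mem_univ x)
  rcases integrable_const_iff.mp hconst with h | h
  · exact (hpos x₀).ne' h
  · exact hμ h

variable [OpensMeasurableSpace X]

theorem integral_prod_rpow_inv_card_pow_le (s : Finset ι) {F : ι → X → ℝ}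
    (hF : ∀ i ∈ s, Continuous (F i)) (hpos : ∀ i ∈ s, ∀ x, 0 < F i x) :
    (∫ x, ∏ i ∈ s, F i x ^ ((#s : ℝ)⁻¹) ∂μ) ^ #s ≤ ∏ i ∈ s, ∫ x, F i x ∂μ := by
  rcases s.eq_empty_or_nonempty with rfl | hs
  · simp
  have hcard : #s ≠ 0 := hs.card_ne_zero
  by_cases hμ : IsFiniteMeasure μ
  · have hint : ∀ i ∈ s, Integrable (F i) μ := fun i hi =>
      (hF i hi).integrable_of_hasCompactSupport (.of_compactSpace _)
    have hsum : ∑ _i ∈ s, (#s : ℝ)⁻¹ = 1 := by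
      rw [sum_const, nsmul_eq_mul, mul_inv_cancel₀ (Nat.cast_ne_zero.mpr hcard)]
    calc (∫ x, ∏ i ∈ s, F i x ^ ((#s : ℝ)⁻¹) ∂μ) ^ #s
        ≤ (∏ i ∈ s, (∫ x, F i x ∂μ) ^ ((#s : ℝ)⁻¹)) ^ #s := by
          refine pow_le_pow_left₀ (integral_nonneg fun x => ?_) ?_ _
          · exact prod_nonneg fun i hi => Real.rpow_nonneg (hpos i hi x).le _
          · exact integral_prod_rpow_le_prod_integral_rpow s hint
              (fun i hi x => (hpos i hi x).le) hsum fun _ _ => by positivity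
      _ = ∏ i ∈ s, ∫ x, F i x ∂μ := by
          rw [← prod_pow]
          exact prod_congr rfl fun i hi => Real.rpow_inv_natCast_pow
            (integral_nonneg fun x => (hpos i hi x).le) hcard
  · -- The left-hand integrand is not integrable, so its integral is the junk value `0`.
    have hzero : ∫ x, ∏ i ∈ s, F i x ^ ((#s : ℝ)⁻¹) ∂μ = 0 := by
      refine integral_undef (Continuous.not_integrable_of_pos ?_ ?_ hμ)
      · exact continuous_finsetProd _ fun i hi =>
          (hF i hi).rpow_const fun x => Or.inl (hpos i hi x).ne'
      · exact fun x => prod_pos fun i hi => Real.rpow_pos_of_pos (hpos i hi x) _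
    rw [hzero, zero_pow hcard]
    exact prod_nonneg fun i hi => integral_nonneg fun x => (hpos i hi x).le

end CompactSpace

theorem prod_Icc_one_eq_mul_prod_range_sub {M : Type*} [CommMonoid M] (b : ℕ → M) {m n : ℕ}
    (hmn : m ≤ n) :
    ∏ i ∈ Icc 1 n, b i = (∏ i ∈ Icc 1 (n - m), b i) * ∏ i ∈ range m, b (n - i) := by
  induction m with
  | zero => simp
  | succ m ih =>
    have hsplit : Icc 1 (n - m) = insert (n - m) (Icc 1 (n - (m + 1))) := by
      ext i; simp only [mem_insert, mem_Icc]; omega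
    rw [ih (by omega), prod_range_succ, hsplit, prod_insert (by simp; omega)]
    ac_rfl

theorem prod_rpow_inv_eq_prod_range_mul_rpow {a : ℕ → ℝ} (ha : ∀ i, 0 ≤ a i) {m n : ℕ}
    (hm : m ≠ 0) (hmn : m ≤ n) :
    ∏ i ∈ Icc 1 n, a i ^ ((n : ℝ)⁻¹)
      = ∏ i ∈ range m,
          ((∏ j ∈ Icc 1 (n - m), a j ^ ((n : ℝ)⁻¹)) * a (n - i) ^ ((m : ℝ) / n)) ^ ((m : ℝ)⁻¹) := by
  set G := ∏ j ∈ Icc 1 (n - m), a j ^ ((n : ℝ)⁻¹)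
  have hG : 0 ≤ G := prod_nonneg fun j _ => Real.rpow_nonneg (ha j) _
  have hexp : (m : ℝ) / n * (m : ℝ)⁻¹ = (n : ℝ)⁻¹ := by
    field_simp
  have hfactor : ∀ i, (G * a (n - i) ^ ((m : ℝ) / n)) ^ ((m : ℝ)⁻¹)
      = G ^ ((m : ℝ)⁻¹) * a (n - i) ^ ((n : ℝ)⁻¹) := fun i => by
    rw [Real.mul_rpow hG (Real.rpow_nonneg (ha _) _), ← Real.rpow_mul (ha _), hexp]
  simp only [hfactor, prod_mul_distrib, prod_const, card_range, Real.rpow_inv_natCast_pow hG hm]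
  exact prod_Icc_one_eq_mul_prod_range_sub _ hmn

theorem integral_prod_rpow_inv_pow_le_prod_integral {X : Type*} [TopologicalSpace X]
    [CompactSpace X] [MeasurableSpace X] [OpensMeasurableSpace X] {μ : Measure X}
    {g : ℕ → X → ℝ} (hg : ∀ i, Continuous (g i)) (hpos : ∀ i x, 0 < g i x) {m n : ℕ}
    (hm : m ≠ 0) (hmn : m ≤ n) :
    (∫ x, ∏ i ∈ Icc 1 n, g i x ^ ((n : ℝ)⁻¹) ∂μ) ^ m
      ≤ ∏ i ∈ range m,
          ∫ x, (∏ j ∈ Icc 1 (n - m), g j x ^ ((n : ℝ)⁻¹)) * g (n - i) x ^ ((m : ℝ) / n) ∂μ := by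
  simp_rw [prod_rpow_inv_eq_prod_range_mul_rpow (fun i => (hpos i _).le) hm hmn]
  simpa using integral_prod_rpow_inv_card_pow_le (μ := μ) (range m)
    (F := fun i x => (∏ j ∈ Icc 1 (n - m), g j x ^ ((n : ℝ)⁻¹)) * g (n - i) x ^ ((m : ℝ) / n))
    (fun i _ => (continuous_finsetProd _ fun j _ =>
        (hg j).rpow_const fun x => Or.inl (hpos j x).ne').mul
      ((hg _).rpow_const fun x => Or.inl (hpos _ x).ne'))
    (fun i _ x => mul_pos (prod_pos fun j _ => Real.rpow_pos_of_pos (hpos j x) _)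
      (Real.rpow_pos_of_pos (hpos _ x) _))

theorem MemConc.continuousOn {φ : ℝ → ℝ} (hφ : MemConc φ) : ContinuousOn φ (Set.Ioi 0) := by
  rcases hφ.2 with ⟨c, -, hc⟩ | ⟨hconc, -, -⟩
  · exact continuousOn_const.congr hc
  · exact hconc.continuousOn isOpen_Ioi

section Density

variable {X : Type*} {φ : ℝ → ℝ} {h f : X → ℝ}

theorem MemConc.density_pos (hφ : MemConc φ) (hpos : ∀ x, 0 < h x) (fpos : ∀ x, 0 < f x)
    (k : ℕ) (x : X) : 0 < φ (1 / (f x * h x ^ k)) * h x * f x :=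
  mul_pos (mul_pos (hφ.1 _ (one_div_pos.mpr (mul_pos (fpos x) (pow_pos (hpos x) k)))) (hpos x))
    (fpos x)

theorem MemConc.continuous_density [TopologicalSpace X] (hφ : MemConc φ) (hpos : ∀ x, 0 < h x)
    (fpos : ∀ x, 0 < f x) (hcont : Continuous h) (fcont : Continuous f) (k : ℕ) :
    Continuous fun x => φ (1 / (f x * h x ^ k)) * h x * f x := by
  have harg : Continuous fun x => 1 / (f x * h x ^ k) :=
    continuous_const.div (fcont.mul (hcont.pow k)) fun x =>
      (mul_pos (fpos x) (pow_pos (hpos x) k)).ne'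
  refine ((hφ.continuousOn.comp_continuous harg fun x => ?_).mul hcont).mul fcont
  exact one_div_pos.mpr (mul_pos (fpos x) (pow_pos (hpos x) k))

end Density

/-- Alexandrov–Fenchel type inequality for the general mixed
`L_φ`-affine surface area: for `1 ≤ m ≤ n`,
`as(φ₁,K₁;…;φ_n,K_n)^m ≤ ∏_{i=0}^{m-1} as(φ₁,K₁;…;φ_{n-m},K_{n-m};φ_{n-i},K_{n-i};…(m times))`.
The `C²₊` bodies `K₁,…,K_n` are encoded by their (positive, continuous) support and
curvature functions `hK i`, `fK i` on the unit sphere, `i ∈ {1,…,n}`. -/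
theorem stmt13 {n m : ℕ} (hm1 : 1 ≤ m) (hmn : m ≤ n)
    (hK fK : ℕ → Metric.sphere (0 : EuclideanSpace ℝ (Fin n)) 1 → ℝ)
    (hKpos : ∀ i u, 0 < hK i u) (fKpos : ∀ i u, 0 < fK i u)
    (hKcont : ∀ i, Continuous (hK i)) (fKcont : ∀ i, Continuous (fK i))
    (φ : ℕ → ℝ → ℝ) (hφ : ∀ i, MemConc (φ i)) :
    (∫ u, ∏ i ∈ Finset.Icc 1 n,
        (φ i (1 / (fK i u * hK i u ^ (n + 1))) * hK i u * fK i u) ^ ((n : ℝ)⁻¹)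
        ∂(μH[(n - 1 : ℝ)])) ^ m
      ≤ ∏ i ∈ Finset.range m,
          ∫ u, (∏ j ∈ Finset.Icc 1 (n - m),
              (φ j (1 / (fK j u * hK j u ^ (n + 1))) * hK j u * fK j u) ^ ((n : ℝ)⁻¹))
            * (φ (n - i) (1 / (fK (n - i) u * hK (n - i) u ^ (n + 1)))
                * hK (n - i) u * fK (n - i) u) ^ ((m : ℝ) / n)
            ∂(μH[(n - 1 : ℝ)]) :=
  integral_prod_rpow_inv_pow_le_prod_integral
    (fun i => (hφ i).continuous_density (hKpos i) (fKpos i) (hKcont i) (fKcont i) (n + 1))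
    (fun i => (hφ i).density_pos (hKpos i) (fKpos i) (n + 1)) (by omega) hmn
end

section
/- Let K₁,…,K_n ∈ C²₊ and φ₁,…,φ_n ∈ Conc(0,∞) be homogeneous of degrees r₁,…,r_n ∈ [0,1). Then as(φ₁,K₁;…;φ_n,K_n) · as(φ₁,K₁°;…;φ_n,K_n°) ≤ n² ∏_{i=1}^n [φ_i(1)² |K_i| |K_i°|]^{1/n}. -/
open MeasureTheory Filter

/-! By homogeneity, `φᵢ(1/(fᵢ hᵢⁿ⁺¹)) hᵢ fᵢ = φᵢ(1) (hᵢ fᵢ)^(1-rᵢ) (hᵢ⁻ⁿ)^rᵢ`, so Hölder's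
inequality with the `2n` exponents `(1-rᵢ)/n`, `rᵢ/n` bounds `as(φ₁,K₁;…;φₙ,Kₙ)` by
`∏ᵢ [φᵢ(1) (∫ hᵢfᵢ)^(1-rᵢ) (∫ hᵢ⁻ⁿ)^rᵢ]^(1/n) = ∏ᵢ [φᵢ(1) (n|Kᵢ|)^(1-rᵢ) (n|Kᵢ°|)^rᵢ]^(1/n)`.
For the polar bodies the roles of `|Kᵢ|` and `|Kᵢ°|` are swapped, so in the product of the two
bounds the exponents `1 - rᵢ` and `rᵢ` add up to `1`. -/

open Finset

lemma apply_eq_rpow_mul_apply_one {φ : ℝ → ℝ} {r : ℝ}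
    (hφ : ∀ l t : ℝ, 0 < l → 0 < t → φ (l * t) = l ^ r * φ t) {t : ℝ} (ht : 0 < t) :
    φ t = t ^ r * φ 1 := by
  simpa using hφ t 1 ht one_pos

lemma apply_one_div_mul_pow_succ_mul_eq {φ : ℝ → ℝ} {r : ℝ}
    (hφ : ∀ l t : ℝ, 0 < l → 0 < t → φ (l * t) = l ^ r * φ t) (d : ℕ) {h f : ℝ}
    (hh : 0 < h) (hf : 0 < f) :
    φ (1 / (f * h ^ (d + 1))) * h * f = φ 1 * ((h * f) ^ (1 - r) * ((h ^ d)⁻¹) ^ r) := by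
  have hsplit : 1 / (f * h ^ (d + 1)) = (h * f)⁻¹ * (h ^ d)⁻¹ := by
    field_simp
    ring
  rw [apply_eq_rpow_mul_apply_one hφ (by positivity), hsplit,
    Real.mul_rpow (by positivity) (by positivity), Real.inv_rpow (by positivity),
    Real.rpow_sub (by positivity), Real.rpow_one]
  field_simp

namespace MeasureTheory

variable {α ι : Type*} [MeasurableSpace α] {μ : Measure α}

theorem integral_prod_rpow_le_prod_integral_rpow (s : Finset ι) {f : ι → α → ℝ}
    (hf : ∀ i ∈ s, Integrable (f i) μ) (hf₀ : ∀ i ∈ s, 0 ≤ᵐ[μ] f i)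
    {p : ι → ℝ} (hp : ∑ i ∈ s, p i = 1) (hp₀ : ∀ i ∈ s, 0 ≤ p i) :
    ∫ a, ∏ i ∈ s, f i a ^ p i ∂μ ≤ ∏ i ∈ s, (∫ a, f i a ∂μ) ^ p i := by
  have hae : ∀ᵐ a ∂μ, ∀ i ∈ s, 0 ≤ f i a := (eventually_all_finset s).2 hf₀
  have hlhs₀ : 0 ≤ᵐ[μ] fun a => ∏ i ∈ s, f i a ^ p i :=
    hae.mono fun a ha => prod_nonneg fun i hi => Real.rpow_nonneg (ha i hi) _
  have hmeas : AEStronglyMeasurable (fun a => ∏ i ∈ s, f i a ^ p i) μ :=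
    Finset.aestronglyMeasurable_fun_prod s fun i hi =>
      ((hf i hi).aemeasurable.pow_const _).aestronglyMeasurable
  have hlint : ∀ i ∈ s, ∫⁻ a, ENNReal.ofReal (f i a) ∂μ = ENNReal.ofReal (∫ a, f i a ∂μ) :=
    fun i hi => (ofReal_integral_eq_lintegral_ofReal (hf i hi) (hf₀ i hi)).symm
  rw [integral_eq_lintegral_of_nonneg_ae hlhs₀ hmeas]
  calc (∫⁻ a, ENNReal.ofReal (∏ i ∈ s, f i a ^ p i) ∂μ).toReal
      = (∫⁻ a, ∏ i ∈ s, ENNReal.ofReal (f i a) ^ p i ∂μ).toReal := by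
        refine congrArg _ (lintegral_congr_ae ?_)
        filter_upwards [hae] with a ha
        rw [ENNReal.ofReal_prod_of_nonneg fun i hi => Real.rpow_nonneg (ha i hi) _]
        exact prod_congr rfl fun i hi => (ENNReal.ofReal_rpow_of_nonneg (ha i hi) (hp₀ i hi)).symm
    _ ≤ (∏ i ∈ s, (∫⁻ a, ENNReal.ofReal (f i a) ∂μ) ^ p i).toReal := by
        refine ENNReal.toReal_mono ?_ (ENNReal.lintegral_prod_norm_pow_le s
          (fun i hi => (hf i hi).aemeasurable.ennreal_ofReal) hp hp₀)
        refine ENNReal.prod_ne_top fun i hi => ?_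
        rw [hlint i hi]
        exact ENNReal.rpow_ne_top_of_nonneg (hp₀ i hi) ENNReal.ofReal_ne_top
    _ = ∏ i ∈ s, (∫ a, f i a ∂μ) ^ p i := by
        rw [ENNReal.toReal_prod]
        refine prod_congr rfl fun i hi => ?_
        rw [hlint i hi, ← ENNReal.toReal_rpow,
          ENNReal.toReal_ofReal (integral_nonneg_of_ae (hf₀ i hi))]

theorem integral_prod_interpolate_rpow_le [Fintype ι] [Nonempty ι] {A B : ι → α → ℝ}
    (hA : ∀ i, Integrable (A i) μ) (hB : ∀ i, Integrable (B i) μ)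
    (hA₀ : ∀ i, 0 ≤ᵐ[μ] A i) (hB₀ : ∀ i, 0 ≤ᵐ[μ] B i) {c r : ι → ℝ} (hc : ∀ i, 0 ≤ c i)
    (hr : ∀ i, r i ∈ Set.Icc (0 : ℝ) 1) :
    ∫ a, ∏ i, (c i * (A i a ^ (1 - r i) * B i a ^ r i)) ^ (Fintype.card ι : ℝ)⁻¹ ∂μ ≤
      ∏ i, (c i * ((∫ a, A i a ∂μ) ^ (1 - r i) * (∫ a, B i a ∂μ) ^ r i))
        ^ (Fintype.card ι : ℝ)⁻¹ := by
  set N : ℝ := (Fintype.card ι : ℝ)⁻¹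
  have hr₁ : ∀ i, 0 ≤ 1 - r i := fun i => sub_nonneg.2 (hr i).2
  have hsplit : ∀ i {x y : ℝ}, 0 ≤ x → 0 ≤ y → (c i * (x ^ (1 - r i) * y ^ r i)) ^ N
      = c i ^ N * (x ^ ((1 - r i) * N) * y ^ (r i * N)) := fun i x y hx hy => by
    rw [Real.mul_rpow (hc i) (by positivity), Real.mul_rpow (by positivity) (by positivity),
      ← Real.rpow_mul hx, ← Real.rpow_mul hy]
  let f : ι ⊕ ι → α → ℝ := Sum.elim A B
  let p : ι ⊕ ι → ℝ := Sum.elim (fun i => (1 - r i) * N) (fun i => r i * N)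
  have hp : ∑ j, p j = 1 := by
    simp only [p, Fintype.sum_sum_type, Sum.elim_inl, Sum.elim_inr, ← sum_add_distrib, ← add_mul,
      sub_add_cancel, one_mul, sum_const, card_univ, nsmul_eq_mul, N]
    exact mul_inv_cancel₀ (by positivity)
  have hp₀ : ∀ j ∈ univ, 0 ≤ p j := by
    rintro (i | i) -
    exacts [mul_nonneg (hr₁ i) (by positivity), mul_nonneg (hr i).1 (by positivity)]
  have hae : ∀ᵐ a ∂μ, ∀ i, 0 ≤ A i a ∧ 0 ≤ B i a :=
    eventually_all.2 fun i => (hA₀ i).and (hB₀ i)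
  calc ∫ a, ∏ i, (c i * (A i a ^ (1 - r i) * B i a ^ r i)) ^ N ∂μ
      = ∫ a, (∏ i, c i ^ N) * ∏ j, f j a ^ p j ∂μ := by
        refine integral_congr_ae ?_
        filter_upwards [hae] with a ha
        simp only [Fintype.prod_sum_type, f, p, Sum.elim_inl, Sum.elim_inr, ← prod_mul_distrib,
          hsplit _ (ha _).1 (ha _).2]
    _ = (∏ i, c i ^ N) * ∫ a, ∏ j, f j a ^ p j ∂μ := integral_const_mul _ _
    _ ≤ (∏ i, c i ^ N) * ∏ j, (∫ a, f j a ∂μ) ^ p j := by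
        refine mul_le_mul_of_nonneg_left ?_ (prod_nonneg fun i _ => Real.rpow_nonneg (hc i) _)
        refine integral_prod_rpow_le_prod_integral_rpow univ ?_ ?_ hp hp₀
        · rintro (i | i) -
          exacts [hA i, hB i]
        · rintro (i | i) -
          exacts [hA₀ i, hB₀ i]
    _ = ∏ i, (c i * ((∫ a, A i a ∂μ) ^ (1 - r i) * (∫ a, B i a ∂μ) ^ r i)) ^ N := by
        simp only [Fintype.prod_sum_type, f, p, Sum.elim_inl, Sum.elim_inr, ← prod_mul_distrib,
          hsplit _ (integral_nonneg_of_ae (hA₀ _)) (integral_nonneg_of_ae (hB₀ _))]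

theorem integral_eq_zero_of_measure_univ_eq_top [TopologicalSpace α] [OpensMeasurableSpace α]
    [CompactSpace α] [Nonempty α] (hμ : μ Set.univ = ⊤) {g : α → ℝ} (hg : Continuous g)
    (hpos : ∀ a, 0 < g a) :
    ∫ a, g a ∂μ = 0 := by
  refine integral_undef fun hint => ?_
  obtain ⟨a₀, -, hmin⟩ := isCompact_univ.exists_isMinOn Set.univ_nonempty hg.continuousOn
  have hfin := hint.measure_ge_lt_top (hpos a₀)
  rw [Set.eq_univ_of_forall fun a => hmin (Set.mem_univ a), hμ] at hfin
  exact hfin.ne rfl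

end MeasureTheory

section MixedAffineSurfaceArea

variable {α : Type*} [MeasurableSpace α] {μ : Measure α} {n : ℕ}
  {φ : Fin n → ℝ → ℝ} {r : Fin n → ℝ} {h f : Fin n → α → ℝ}

/-- `as(φ₁,K₁;…;φₙ,Kₙ)`, for bodies with support functions `h i` and curvature functions `f i`
on the sphere `α` with surface measure `μ`. -/
noncomputable def mixedAffineSurfaceArea (μ : Measure α) (φ : Fin n → ℝ → ℝ)
    (h f : Fin n → α → ℝ) : ℝ :=
  ∫ a, ∏ i, (φ i (1 / (f i a * h i a ^ (n + 1))) * h i a * f i a) ^ (n : ℝ)⁻¹ ∂μ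

lemma mixedAffineSurfaceArea_eq
    (hhom : ∀ i, ∀ l t : ℝ, 0 < l → 0 < t → φ i (l * t) = l ^ r i * φ i t)
    (hpos : ∀ i a, 0 < h i a) (fpos : ∀ i a, 0 < f i a) :
    mixedAffineSurfaceArea μ φ h f = ∫ a, ∏ i, (φ i 1 * ((h i a * f i a) ^ (1 - r i)
      * ((h i a ^ n)⁻¹) ^ r i)) ^ (n : ℝ)⁻¹ ∂μ := by
  have hpt : ∀ i a, φ i (1 / (f i a * h i a ^ (n + 1))) * h i a * f i a
      = φ i 1 * ((h i a * f i a) ^ (1 - r i) * ((h i a ^ n)⁻¹) ^ r i) := fun i a =>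
    apply_one_div_mul_pow_succ_mul_eq (hhom i) n (hpos i a) (fpos i a)
  simp_rw [mixedAffineSurfaceArea, hpt]

lemma mixedAffineSurfaceArea_nonneg
    (hhom : ∀ i, ∀ l t : ℝ, 0 < l → 0 < t → φ i (l * t) = l ^ r i * φ i t)
    (hpos : ∀ i a, 0 < h i a) (fpos : ∀ i a, 0 < f i a)
    (hφ : ∀ i, 0 ≤ φ i 1) :
    0 ≤ mixedAffineSurfaceArea μ φ h f := by
  rw [mixedAffineSurfaceArea_eq hhom hpos fpos]
  refine integral_nonneg fun a => prod_nonneg fun i _ => Real.rpow_nonneg ?_ _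
  have := hpos i a
  have := fpos i a
  have := hφ i
  positivity

lemma mixedAffineSurfaceArea_le [NeZero n]
    (hhom : ∀ i, ∀ l t : ℝ, 0 < l → 0 < t → φ i (l * t) = l ^ r i * φ i t)
    (hpos : ∀ i a, 0 < h i a) (fpos : ∀ i a, 0 < f i a)
    (hhf : ∀ i, Integrable (fun a => h i a * f i a) μ)
    (hhn : ∀ i, Integrable (fun a => (h i a ^ n)⁻¹) μ)
    (hφ : ∀ i, 0 ≤ φ i 1) (hr : ∀ i, r i ∈ Set.Icc (0 : ℝ) 1) :
    mixedAffineSurfaceArea μ φ h f ≤ ∏ i, (φ i 1 * ((∫ a, h i a * f i a ∂μ) ^ (1 - r i)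
      * (∫ a, (h i a ^ n)⁻¹ ∂μ) ^ r i)) ^ (n : ℝ)⁻¹ := by
  rw [mixedAffineSurfaceArea_eq hhom hpos fpos]
  simpa using integral_prod_interpolate_rpow_le hhf hhn
    (fun i => ae_of_all _ fun a => (mul_pos (hpos i a) (fpos i a)).le)
    (fun i => ae_of_all _ fun a => (inv_pos.2 (pow_pos (hpos i a) n)).le) hφ hr

lemma mixedAffineSurfaceArea_le_of_continuous [NeZero n] [TopologicalSpace α]
    [OpensMeasurableSpace α] [CompactSpace α] [IsFiniteMeasure μ]
    (hhom : ∀ i, ∀ l t : ℝ, 0 < l → 0 < t → φ i (l * t) = l ^ r i * φ i t)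
    (hpos : ∀ i a, 0 < h i a) (fpos : ∀ i a, 0 < f i a)
    (hcont : ∀ i, Continuous (h i)) (fcont : ∀ i, Continuous (f i))
    (hφ : ∀ i, 0 ≤ φ i 1) (hr : ∀ i, r i ∈ Set.Icc (0 : ℝ) 1) :
    mixedAffineSurfaceArea μ φ h f ≤ ∏ i, (φ i 1 * ((∫ a, h i a * f i a ∂μ) ^ (1 - r i)
      * (∫ a, (h i a ^ n)⁻¹ ∂μ) ^ r i)) ^ (n : ℝ)⁻¹ :=
  mixedAffineSurfaceArea_le hhom hpos fpos
    (fun i => ((hcont i).mul (fcont i)).integrable_of_hasCompactSupport (.of_compactSpace _))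
    (fun i => (((hcont i).pow n).inv₀ fun a => (pow_pos (hpos i a) n).ne')
      |>.integrable_of_hasCompactSupport (.of_compactSpace _))
    hφ hr

lemma mixedAffineSurfaceArea_eq_zero_of_measure_univ_eq_top [TopologicalSpace α]
    [OpensMeasurableSpace α] [CompactSpace α] [Nonempty α] (hμ : μ Set.univ = ⊤)
    (hhom : ∀ i, ∀ l t : ℝ, 0 < l → 0 < t → φ i (l * t) = l ^ r i * φ i t)
    (hpos : ∀ i a, 0 < h i a) (fpos : ∀ i a, 0 < f i a)
    (hcont : ∀ i, Continuous (h i)) (fcont : ∀ i, Continuous (f i)) (hφ : ∀ i, 0 < φ i 1) :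
    mixedAffineSurfaceArea μ φ h f = 0 := by
  have hbase : ∀ i a, 0 < φ i 1 * ((h i a * f i a) ^ (1 - r i) * ((h i a ^ n)⁻¹) ^ r i) :=
    fun i a => by
      have := hpos i a
      have := fpos i a
      have := hφ i
      positivity
  rw [mixedAffineSurfaceArea_eq hhom hpos fpos]
  refine integral_eq_zero_of_measure_univ_eq_top hμ ?_
    fun a => prod_pos fun i _ => Real.rpow_pos_of_pos (hbase i a) _
  refine continuous_finsetProd _ fun i _ => ?_
  refine Continuous.rpow_const ?_ fun a => Or.inl (hbase i a).ne'
  refine continuous_const.mul ((((hcont i).mul (fcont i)).rpow_const fun a => Or.inl ?_).mul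
    ((((hcont i).pow n).inv₀ fun a => (pow_pos (hpos i a) n).ne').rpow_const fun a => Or.inl ?_))
  · exact (mul_pos (hpos i a) (fpos i a)).ne'
  · exact (inv_pos.2 (pow_pos (hpos i a) n)).ne'

end MixedAffineSurfaceArea

lemma prod_interpolate_mul_prod_interpolate_swap {n : ℕ} [NeZero n] {c V P r : Fin n → ℝ}
    (hc : ∀ i, 0 ≤ c i) (hV : ∀ i, 0 ≤ V i) (hP : ∀ i, 0 ≤ P i)
    (hr : ∀ i, r i ∈ Set.Icc (0 : ℝ) 1) :
    (∏ i, (c i * ((n * V i) ^ (1 - r i) * (n * P i) ^ r i)) ^ (n : ℝ)⁻¹)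
      * ∏ i, (c i * ((n * P i) ^ (1 - r i) * (n * V i) ^ r i)) ^ (n : ℝ)⁻¹
      = n ^ 2 * ∏ i, (c i ^ 2 * V i * P i) ^ (n : ℝ)⁻¹ := by
  have hpair : ∀ i, (c i * ((n * V i) ^ (1 - r i) * (n * P i) ^ r i))
      * (c i * ((n * P i) ^ (1 - r i) * (n * V i) ^ r i)) = n ^ 2 * (c i ^ 2 * V i * P i) := by
    intro i
    have hsum : ∀ x : ℝ, 0 ≤ x → x ^ (1 - r i) * x ^ r i = x := fun x hx => by
      rw [← Real.rpow_add_of_nonneg hx (sub_nonneg.2 (hr i).2) (hr i).1, sub_add_cancel,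
        Real.rpow_one]
    have := hV i
    have := hP i
    calc _ = c i ^ 2 * ((n * V i) ^ (1 - r i) * (n * V i) ^ r i)
          * ((n * P i) ^ (1 - r i) * (n * P i) ^ r i) := by ring
      _ = n ^ 2 * (c i ^ 2 * V i * P i) := by
        rw [hsum _ (by positivity), hsum _ (by positivity)]
        ring
  have hVP : ∀ i, 0 ≤ c i ^ 2 * V i * P i := fun i => by
    have := hV i
    have := hP i
    positivity
  rw [← prod_mul_distrib]
  calc ∏ i, (c i * ((n * V i) ^ (1 - r i) * (n * P i) ^ r i)) ^ (n : ℝ)⁻¹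
        * (c i * ((n * P i) ^ (1 - r i) * (n * V i) ^ r i)) ^ (n : ℝ)⁻¹
      = ∏ i, ((n : ℝ) ^ 2) ^ (n : ℝ)⁻¹ * (c i ^ 2 * V i * P i) ^ (n : ℝ)⁻¹ := by
        refine prod_congr rfl fun i _ => ?_
        have := hc i
        have := hV i
        have := hP i
        rw [← Real.mul_rpow (by positivity) (by positivity), hpair,
          Real.mul_rpow (by positivity) (hVP i)]
    _ = n ^ 2 * ∏ i, (c i ^ 2 * V i * P i) ^ (n : ℝ)⁻¹ := by
        rw [prod_mul_distrib, prod_const, card_univ, Fintype.card_fin,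
          Real.rpow_inv_natCast_pow (by positivity) (NeZero.ne n)]

/-- `hK i`, `fK i` (resp. `hP i`, `fP i`) are the support and curvature functions of `Kᵢ`
(resp. `Kᵢ°`) on the unit sphere, and `vol i = |Kᵢ|`, `pvol i = |Kᵢ°|`. -/
theorem stmt14_general {n : ℕ} (hn : 2 ≤ n)
    (hK fK hP fP : Fin n → Metric.sphere (0 : EuclideanSpace ℝ (Fin n)) 1 → ℝ)
    (hKpos : ∀ i u, 0 < hK i u) (fKpos : ∀ i u, 0 < fK i u)
    (hPpos : ∀ i u, 0 < hP i u) (fPpos : ∀ i u, 0 < fP i u)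
    (hKcont : ∀ i, Continuous (hK i)) (fKcont : ∀ i, Continuous (fK i))
    (hPcont : ∀ i, Continuous (hP i)) (fPcont : ∀ i, Continuous (fP i))
    (vol pvol : Fin n → ℝ)
    (hid1 : ∀ i, ∫ u, hK i u * fK i u ∂(μH[(n - 1 : ℝ)]) = n * vol i)
    (hid2 : ∀ i, ∫ u, (hK i u ^ (n : ℕ))⁻¹ ∂(μH[(n - 1 : ℝ)]) = n * pvol i)
    (hid3 : ∀ i, ∫ u, hP i u * fP i u ∂(μH[(n - 1 : ℝ)]) = n * pvol i)
    (hid4 : ∀ i, ∫ u, (hP i u ^ (n : ℕ))⁻¹ ∂(μH[(n - 1 : ℝ)]) = n * vol i)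
    (φ : Fin n → ℝ → ℝ) (hφ : ∀ i, MemConc (φ i))
    (r : Fin n → ℝ) (hr : ∀ i, 0 ≤ r i ∧ r i < 1)
    (hhom : ∀ i, ∀ l t : ℝ, 0 < l → 0 < t → φ i (l * t) = l ^ r i * φ i t) :
    (∫ u, ∏ i, (φ i (1 / (fK i u * hK i u ^ (n + 1))) * hK i u * fK i u) ^ ((n : ℝ)⁻¹)
        ∂(μH[(n - 1 : ℝ)]))
      * (∫ u, ∏ i, (φ i (1 / (fP i u * hP i u ^ (n + 1))) * hP i u * fP i u) ^ ((n : ℝ)⁻¹)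
          ∂(μH[(n - 1 : ℝ)]))
      ≤ (n : ℝ) ^ 2 * ∏ i, (φ i 1 ^ 2 * vol i * pvol i) ^ ((n : ℝ)⁻¹) := by
  have : NeZero n := ⟨by omega⟩
  set μ : Measure (Metric.sphere (0 : EuclideanSpace ℝ (Fin n)) 1) := μH[(n - 1 : ℝ)]
  change mixedAffineSurfaceArea μ φ hK fK * mixedAffineSurfaceArea μ φ hP fP ≤ _
  have hφ₁ : ∀ i, 0 < φ i 1 := fun i => (hφ i).1 1 one_pos
  have hr' : ∀ i, r i ∈ Set.Icc (0 : ℝ) 1 := fun i => ⟨(hr i).1, (hr i).2.le⟩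
  have hvol : ∀ i, 0 ≤ vol i := fun i => nonneg_of_mul_nonneg_right
    ((hid1 i) ▸ integral_nonneg fun u => (mul_pos (hKpos i u) (fKpos i u)).le) (by positivity)
  have hpvol : ∀ i, 0 ≤ pvol i := fun i => nonneg_of_mul_nonneg_right
    ((hid2 i) ▸ integral_nonneg fun u => (inv_pos.2 (pow_pos (hKpos i u) n)).le) (by positivity)
  -- The surface measure is not known to be finite; if it is not, the integrals are junk `0`.
  by_cases hμ : μ Set.univ = ⊤
  · have : Nonempty (Metric.sphere (0 : EuclideanSpace ℝ (Fin n)) 1) :=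
      (NormedSpace.sphere_nonempty.2 zero_le_one).coe_sort
    rw [mixedAffineSurfaceArea_eq_zero_of_measure_univ_eq_top hμ hhom hKpos fKpos hKcont fKcont
      hφ₁, zero_mul]
    exact mul_nonneg (by positivity) (prod_nonneg fun i _ => Real.rpow_nonneg
      (mul_nonneg (mul_nonneg (sq_nonneg _) (hvol i)) (hpvol i)) _)
  have : IsFiniteMeasure μ := ⟨lt_top_iff_ne_top.2 hμ⟩
  have hKbound := mixedAffineSurfaceArea_le_of_continuous (μ := μ) hhom hKpos fKpos hKcont fKcont
    (fun i => (hφ₁ i).le) hr'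
  have hPbound := mixedAffineSurfaceArea_le_of_continuous (μ := μ) hhom hPpos fPpos hPcont fPcont
    (fun i => (hφ₁ i).le) hr'
  simp only [hid1, hid2] at hKbound
  simp only [hid3, hid4] at hPbound
  calc _ ≤ _ := mul_le_mul hKbound hPbound
        (mixedAffineSurfaceArea_nonneg hhom hPpos fPpos fun i => (hφ₁ i).le)
        ((mixedAffineSurfaceArea_nonneg hhom hKpos fKpos fun i => (hφ₁ i).le).trans hKbound)
    _ = _ := prod_interpolate_mul_prod_interpolate_swap (fun i => (hφ₁ i).le) hvol hpvol hr'

/-- Santaló-type inequality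
`as(φ₁,K₁;…;φ_n,K_n)·as(φ₁,K₁°;…;φ_n,K_n°) ≤ n² ∏ᵢ [φᵢ(1)² |Kᵢ| |Kᵢ°|]^{1/n}`
for `C²₊` bodies `Kᵢ` and `φᵢ ∈ Conc(0,∞)` homogeneous of degrees `rᵢ ∈ [0,1)`.
Each body `Kᵢ` and its polar are encoded by support functions `hK i`, `hP i` and curvature
functions `fK i`, `fP i`, linked to the volumes `vol i = |Kᵢ|` and `pvol i = |Kᵢ°|` by the
standard integral identities. -/
theorem stmt14 {n : ℕ} (hn : 2 ≤ n)
    (K : Fin n → Set (EuclideanSpace ℝ (Fin n)))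
    (hKconv : ∀ i, Convex ℝ (K i)) (hKcomp : ∀ i, IsCompact (K i))
    (hK0 : ∀ i, (0 : EuclideanSpace ℝ (Fin n)) ∈ interior (K i))
    (hK fK hP fP : Fin n → Metric.sphere (0 : EuclideanSpace ℝ (Fin n)) 1 → ℝ)
    (hKpos : ∀ i u, 0 < hK i u) (fKpos : ∀ i u, 0 < fK i u)
    (hPpos : ∀ i u, 0 < hP i u) (fPpos : ∀ i u, 0 < fP i u)
    (hKcont : ∀ i, Continuous (hK i)) (fKcont : ∀ i, Continuous (fK i))
    (hPcont : ∀ i, Continuous (hP i)) (fPcont : ∀ i, Continuous (fP i))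
    (vol pvol : Fin n → ℝ)
    (hvol : ∀ i, vol i = (volume (K i)).toReal)
    (hpvol : ∀ i, pvol i = (volume {y : EuclideanSpace ℝ (Fin n) |
      ∀ x ∈ K i, (inner ℝ x y : ℝ) ≤ 1}).toReal)
    (hid1 : ∀ i, ∫ u, hK i u * fK i u ∂(μH[(n - 1 : ℝ)]) = n * vol i)
    (hid2 : ∀ i, ∫ u, (hK i u ^ (n : ℕ))⁻¹ ∂(μH[(n - 1 : ℝ)]) = n * pvol i)
    (hid3 : ∀ i, ∫ u, hP i u * fP i u ∂(μH[(n - 1 : ℝ)]) = n * pvol i)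
    (hid4 : ∀ i, ∫ u, (hP i u ^ (n : ℕ))⁻¹ ∂(μH[(n - 1 : ℝ)]) = n * vol i)
    (φ : Fin n → ℝ → ℝ) (hφ : ∀ i, MemConc (φ i))
    (r : Fin n → ℝ) (hr : ∀ i, 0 ≤ r i ∧ r i < 1)
    (hhom : ∀ i, ∀ l t : ℝ, 0 < l → 0 < t → φ i (l * t) = l ^ r i * φ i t) :
    (∫ u, ∏ i, (φ i (1 / (fK i u * hK i u ^ (n + 1))) * hK i u * fK i u) ^ ((n : ℝ)⁻¹)
        ∂(μH[(n - 1 : ℝ)]))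
      * (∫ u, ∏ i, (φ i (1 / (fP i u * hP i u ^ (n + 1))) * hP i u * fP i u) ^ ((n : ℝ)⁻¹)
          ∂(μH[(n - 1 : ℝ)]))
      ≤ (n : ℝ) ^ 2 * ∏ i, (φ i 1 ^ 2 * vol i * pvol i) ^ ((n : ℝ)⁻¹) :=
  stmt14_general hn hK fK hP fP hKpos fKpos hPpos fPpos hKcont fKcont hPcont fPcont vol pvol hid1
    hid2 hid3 hid4 φ hφ r hr hhom
end
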